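/- In the 4×4 game of Figure 4 with k = 2 (payoffs: row actions T,C,D,B vs column L,C,D,R; the central 2×2 block is a prisoner's dilemma with u(C,C)=(6,6), u(C,D)=(2,9), u(D,C)=(9,2), u(D,D)=(5,5); u_1(T,L)=3; the remaining payoffs as specified in Figure 4), mutual cooperation (C,C) is not an interdependent-choice equilibrium with respect to the threat set B = {C,D} × {C,D}, but it is an ICE with respect to the full action set A (using T and R as punishments). -/

import Mathlib

open Finset

/-- Row player payoffs (k = 2); rows T,C,D,B = 0,1,2,3; columns L,C,D,R = 0,1,2,3. -/
def gU1 : Fin 4 → Fin 4 → ℝ :=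
  fun a1 a2 => !![(3:ℝ), 0, 0, 0; 2, 6, 2, 2; 0, 9, 5, 0; 0, 0, 0, 3] a1 a2

/-- Column player payoffs. -/
def gU2 : Fin 4 → Fin 4 → ℝ :=
  fun a1 a2 => !![(0:ℝ), 2, 0, 3; 0, 6, 9, 0; 0, 2, 5, 0; 3, 2, 0, 0] a1 a2

/-- The point mass on (C,C) is an ICE with respect to the threat sets `B1 × B2`:
there is an ordering rule `(t1, t2)` such that each player prefers complying to any
deviation, where a deviation by the first mover is punished by the worst action in
`B_{-i} ∪ {C}`. -/
def icePointCC (B1 B2 : Finset (Fin 4)) : Prop :=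
  ∃ t1 t2 : ℝ, 0 ≤ t1 ∧ 0 ≤ t2 ∧ t1 + t2 = 1 ∧
    (∀ a1' : Fin 4,
      (1 - t1) * gU1 a1' 1 +
        t1 * (insert (1 : Fin 4) B2).inf' (Finset.insert_nonempty 1 B2)
          (fun b2 => gU1 a1' b2) ≤ gU1 1 1) ∧
    (∀ a2' : Fin 4,
      (1 - t2) * gU2 1 a2' +
        t2 * (insert (1 : Fin 4) B1).inf' (Finset.insert_nonempty 1 B1)
          (fun b1 => gU2 b1 a2') ≤ gU2 1 1)

lemma set12 : (insert (1 : Fin 4) ({1, 2} : Finset (Fin 4))) = {1, 2} := by decide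

lemma setU : (insert (1 : Fin 4) (Finset.univ : Finset (Fin 4))) = {0, 1, 2, 3} := by decide

lemma infU (f : Fin 4 → ℝ) {H} :
    (insert (1 : Fin 4) Finset.univ).inf' H f = min (f 0) (min (f 1) (min (f 2) (f 3))) := by
  refine (Finset.inf'_congr H
    (show insert (1 : Fin 4) Finset.univ = ({0, 1, 2, 3} : Finset (Fin 4)) by decide)
    (fun a _ => rfl)).trans ?_
  simp [Finset.inf'_insert, Finset.inf'_singleton]

/-- In the 4×4 game with k = 2, mutual cooperation (C,C) is not an ICE with respect
to the central threat set {C,D} × {C,D}, but it is an ICE with respect to the full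
action set (using T and R as punishments). -/
theorem stmt17 :
    ¬ icePointCC ({1, 2} : Finset (Fin 4)) ({1, 2} : Finset (Fin 4)) ∧
    icePointCC (Finset.univ : Finset (Fin 4)) (Finset.univ : Finset (Fin 4)) := by
  constructor
  · rintro ⟨t1, t2, ht1, ht2, hsum, h1, h2⟩
    have H1 := h1 2
    have H2 := h2 2
    simp only [Finset.inf'_insert, Finset.inf'_singleton, gU1, gU2] at H1 H2
    norm_num [min_def, Matrix.cons_val_two, Matrix.cons_val_three, Matrix.vecHead, Matrix.vecTail] at H1 H2
    linarith
  · refine ⟨1/2, 1/2, by norm_num, by norm_num, by norm_num, ?_, ?_⟩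
    · intro a
      rw [infU]
      fin_cases a <;> norm_num [gU1, min_def, Matrix.cons_val_two, Matrix.cons_val_three, Matrix.vecHead, Matrix.vecTail]
    · intro a
      rw [infU]
      fin_cases a <;> norm_num [gU2, min_def, Matrix.cons_val_two, Matrix.cons_val_three, Matrix.vecHead, Matrix.vecTail]
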